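/- Let 0 ≤ ξ, ζ < ω₁ be countable ordinals and let M ⊆ ℕ be infinite. Then there exists an infinite L ⊆ M such that 𝓢_ξ(L)[𝓢_ζ] ⊆ 𝓢_{ζ+ξ}, and this inclusion still holds when L is replaced by any spread of L. -/

import Mathlib

open Filter Topology

noncomputable section

/-- The first uncountable ordinal `ω₁`. -/
def omega1 : Ordinal := (Cardinal.aleph 1).ord

/-- The combinatorial operation `𝓕[𝓖]` on families of finite subsets of `ℕ`:
all unions `E₁ ∪ ⋯ ∪ Eₙ` with `E₁ < ⋯ < Eₙ` nonempty members of `𝓖` and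
`(min Eᵢ)ᵢ ∈ 𝓕`. -/
def famOp (F G : Set (Finset ℕ)) : Set (Finset ℕ) :=
  {E | ∃ (n : ℕ) (Es : ℕ → Finset ℕ),
    (∀ i < n, Es i ∈ G) ∧ (∀ i < n, (Es i).Nonempty) ∧
    (∀ i j : ℕ, i < j → j < n → ∀ a ∈ Es i, ∀ b ∈ Es j, a < b) ∧
    (Finset.image (fun i => sInf ((Es i : Set ℕ))) (Finset.range n) ∈ F) ∧
    E = (Finset.range n).biUnion Es}

/-- The first Schreier family `𝓢₁ = {E : |E| ≤ min E}`. -/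
def schreierOne : Set (Finset ℕ) := {E : Finset ℕ | ∀ n ∈ E, E.card ≤ n}

/-- A system of Schreier families `(𝓢_ξ)` together with the fixed cofinal sequences
`(ξ_n)` used at countable limit ordinals: `𝓢_0 = {∅} ∪ {{n} : n ∈ ℕ}`,
`𝓢_{ξ+1} = 𝓢₁[𝓢_ξ]`, and at a countable limit `ξ`,
`𝓢_ξ = {E : ∃ n, n ≤ min E ∧ E ∈ 𝓢_{ξ_n}}` where `ξ_n ↑ ξ` and
`𝓢_{ξ_n} ⊆ 𝓢_{ξ_{n+1}}`. -/
structure SchreierSystem where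
  S : Ordinal → Set (Finset ℕ)
  seq : Ordinal → ℕ → Ordinal
  S_zero : S 0 = {E : Finset ℕ | E = ∅ ∨ ∃ n : ℕ, E = {n}}
  S_succ : ∀ ξ : Ordinal, S (ξ + 1) = famOp schreierOne (S ξ)
  seq_strictMono : ∀ ξ : Ordinal, ξ < omega1 → Order.IsSuccLimit ξ → StrictMono (seq ξ)
  seq_lt : ∀ ξ : Ordinal, ξ < omega1 → Order.IsSuccLimit ξ → ∀ n : ℕ, seq ξ n < ξ
  seq_iSup : ∀ ξ : Ordinal, ξ < omega1 → Order.IsSuccLimit ξ → (⨆ n : ℕ, seq ξ n) = ξ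
  S_seq_mono : ∀ ξ : Ordinal, ξ < omega1 → Order.IsSuccLimit ξ → ∀ n : ℕ, S (seq ξ n) ⊆ S (seq ξ (n + 1))
  S_limit : ∀ ξ : Ordinal, ξ < omega1 → Order.IsSuccLimit ξ →
    S ξ = {E : Finset ℕ | ∃ n : ℕ, (∀ m ∈ E, n ≤ m) ∧ E ∈ S (seq ξ n)}

/-- The image family `𝓕(g) = {g(E) : E ∈ 𝓕}` of a family under a map `g : ℕ → ℕ`
(for a strictly monotone `g` this is `𝓕(M)` where `M = g(ℕ)`). -/
def famMap (g : ℕ → ℕ) (F : Set (Finset ℕ)) : Set (Finset ℕ) :=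
  (fun E : Finset ℕ => E.image g) '' F

/-!
Induct on `η`, proving for all `ξ ≤ η` at once that every `M` has a subsequence `L` with
`𝓢_ξ(L')[𝓢_ζ] ⊆ 𝓢_{ζ+η}` for all spreads `L'` of `L`. At a successor `ξ = γ + 1`, a set of
`𝓢₁[𝓢_γ](L')[𝓢_ζ]` regroups into a set of `𝓢₁[𝓢_γ(L')[𝓢_ζ]]`: merge the `𝓢_ζ`-blocks whose
minima lie in `L'(Fⱼ)`; the Schreier condition survives because `L' n ≥ n`. When `ξ < η`, it is
enough to shift `L` so that all sets start beyond the index required by `𝓢₁` or by the limit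
clause. At a limit `ξ = η`, diagonalise over nested subsequences, one for each `𝓢_{ξ_n}`: a set
`F ∈ 𝓢_{ξ_n}` with `n ≤ min F` only sees the tail of the diagonal, which dominates the `n`-th
subsequence there.
-/

open Finset

section Blocks

variable {n : ℕ} {Es : ℕ → Finset ℕ}

lemma sInf_lt_sInf_of_blocks (hne : ∀ i < n, (Es i).Nonempty)
    (hinc : ∀ i j : ℕ, i < j → j < n → ∀ a ∈ Es i, ∀ b ∈ Es j, a < b) {i j : ℕ}
    (hij : i < j) (hj : j < n) : sInf (Es i : Set ℕ) < sInf (Es j : Set ℕ) :=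
  hinc i j hij hj _ (hne i (hij.trans hj)).csInf_mem _ (hne j hj).csInf_mem

lemma lt_of_sInf_lt_sInf_of_blocks (hne : ∀ i < n, (Es i).Nonempty)
    (hinc : ∀ i j : ℕ, i < j → j < n → ∀ a ∈ Es i, ∀ b ∈ Es j, a < b) {i j : ℕ}
    (hi : i < n) (hj : j < n) (h : sInf (Es i : Set ℕ) < sInf (Es j : Set ℕ)) :
    ∀ a ∈ Es i, ∀ b ∈ Es j, a < b := by
  rcases lt_trichotomy i j with hij | rfl | hji
  · exact hinc i j hij hj
  · exact absurd h (lt_irrefl _)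
  · exact absurd h (sInf_lt_sInf_of_blocks hne hinc hji hi).asymm

lemma card_image_sInf_of_blocks (hne : ∀ i < n, (Es i).Nonempty)
    (hinc : ∀ i j : ℕ, i < j → j < n → ∀ a ∈ Es i, ∀ b ∈ Es j, a < b) :
    ((range n).image fun i => sInf (Es i : Set ℕ)).card = n := by
  rw [card_image_of_injOn, card_range]
  refine StrictMonoOn.injOn fun i _ j hj hij => ?_
  exact sInf_lt_sInf_of_blocks hne hinc hij (by simpa using hj)

end Blocks

lemma famOp_mono_right {F G G' : Set (Finset ℕ)} (h : G ⊆ G') : famOp F G ⊆ famOp F G' := by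
  rintro E ⟨n, Es, hG, hrest⟩
  exact ⟨n, Es, fun i hi => h (hG i hi), hrest⟩

lemma famOp_subset_of_card_le_one {F G : Set (Finset ℕ)} (hF : ∀ E ∈ F, E.card ≤ 1)
    (hG : ∅ ∈ G) : famOp F G ⊆ G := by
  rintro E ⟨n, Es, hEs, hne, hinc, hmins, rfl⟩
  have hn : n ≤ 1 := card_image_sInf_of_blocks hne hinc ▸ hF _ hmins
  interval_cases n
  · simpa using hG
  · simpa using hEs 0 one_pos

lemma mem_famOp_schreierOne_of_mem {G : Set (Finset ℕ)} {E : Finset ℕ} (hE : E ∈ G)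
    (hpos : ∀ a ∈ E, 1 ≤ a) : E ∈ famOp schreierOne G := by
  rcases E.eq_empty_or_nonempty with rfl | hne
  · exact ⟨0, fun _ => ∅, by simp, by simp, by simp, by simp [schreierOne], by simp⟩
  · refine ⟨1, fun _ => E, by simpa, by simpa, by omega, ?_, by simp⟩
    simpa [schreierOne] using hpos _ hne.csInf_mem

lemma exists_le_of_mem_famOp_famMap {L : ℕ → ℕ} {F G : Set (Finset ℕ)} {E : Finset ℕ}
    (hE : E ∈ famOp (famMap L F) G) : ∀ a ∈ E, ∃ x, L x ≤ a := by
  obtain ⟨n, Es, -, -, -, ⟨D, -, hD⟩, rfl⟩ := hE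
  intro a ha
  obtain ⟨i, hi, hai⟩ := mem_biUnion.1 ha
  have hmin : sInf (Es i : Set ℕ) ∈ D.image L := by
    rw [show D.image L = _ from hD]; exact mem_image_of_mem _ hi
  obtain ⟨x, -, hx⟩ := mem_image.1 hmin
  exact ⟨x, hx ▸ Nat.sInf_le hai⟩

lemma biUnion_mem_famOp {F G : Set (Finset ℕ)} (I : Finset ℕ) (Es : ℕ → Finset ℕ)
    (hG : ∀ i ∈ I, Es i ∈ G) (hne : ∀ i ∈ I, (Es i).Nonempty)
    (hinc : ∀ i ∈ I, ∀ j ∈ I, i < j → ∀ a ∈ Es i, ∀ b ∈ Es j, a < b)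
    (hmins : I.image (fun i => sInf (Es i : Set ℕ)) ∈ F) :
    I.biUnion Es ∈ famOp F G := by
  set e : ℕ → ℕ := fun t => if h : t < I.card then I.orderEmbOfFin rfl ⟨t, h⟩ else 0
  have he_mem : ∀ t < I.card, e t ∈ I := fun t ht => by
    simp only [e, dif_pos ht]; exact I.orderEmbOfFin_mem rfl _
  have he_mono : ∀ s t, s < t → t < I.card → e s < e t := fun s t hst ht => by
    simp only [e, dif_pos ht, dif_pos (hst.trans ht)]
    exact (I.orderEmbOfFin rfl).strictMono hst
  have he_image : (range I.card).image e = I := by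
    refine Subset.antisymm (fun i hi => ?_) (fun i hi => ?_)
    · obtain ⟨t, ht, rfl⟩ := mem_image.1 hi
      exact he_mem t (mem_range.1 ht)
    · obtain ⟨t, rfl⟩ : i ∈ Set.range (I.orderEmbOfFin rfl) := by
        rw [range_orderEmbOfFin]; exact hi
      exact mem_image.2 ⟨t, mem_range.2 t.2, by simp [e]⟩
  refine ⟨I.card, fun t => Es (e t), fun t ht => hG _ (he_mem t ht),
    fun t ht => hne _ (he_mem t ht),
    fun s t hst ht => hinc _ (he_mem s (hst.trans ht)) _ (he_mem t ht) (he_mono s t hst ht),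
    ?_, ?_⟩
  · rwa [← he_image, image_image] at hmins
  · calc I.biUnion Es = ((range I.card).image e).biUnion Es := by rw [he_image]
      _ = _ := image_biUnion

lemma biUnion_eq_biUnion_filter {ι κ α : Type*} [DecidableEq α] {s : Finset ι} {t : Finset κ}
    (Es : ι → Finset α) (p : κ → ι → Prop) [∀ j, DecidablePred (p j)]
    (h : ∀ i ∈ s, ∃ j ∈ t, p j i) :
    s.biUnion Es = t.biUnion fun j => (s.filter (p j)).biUnion Es := by
  ext a
  simp only [mem_biUnion, mem_filter]
  constructor
  · rintro ⟨i, hi, ha⟩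
    obtain ⟨j, hj, hp⟩ := h i hi
    exact ⟨j, hj, i, ⟨hi, hp⟩, ha⟩
  · rintro ⟨j, -, i, ⟨hi, -⟩, ha⟩
    exact ⟨i, hi, ha⟩

section SchreierOneBlocks

variable {k : ℕ} {Fs : ℕ → Finset ℕ}

lemma le_of_mem_of_image_sInf_mem_schreierOne (hne : ∀ j < k, (Fs j).Nonempty)
    (hinc : ∀ i j : ℕ, i < j → j < k → ∀ a ∈ Fs i, ∀ b ∈ Fs j, a < b)
    (hS : (range k).image (fun j => sInf (Fs j : Set ℕ)) ∈ schreierOne) :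
    ∀ j < k, ∀ x ∈ Fs j, k ≤ x := fun j hj x hx =>
  calc k = _ := (card_image_sInf_of_blocks hne hinc).symm
    _ ≤ sInf (Fs j : Set ℕ) := hS _ (mem_image_of_mem _ (mem_range.2 hj))
    _ ≤ x := Nat.sInf_le hx

lemma biUnion_mem_famOp_schreierOne {H : Set (Finset ℕ)} (hH : ∀ j < k, Fs j ∈ H)
    (hne : ∀ j < k, (Fs j).Nonempty)
    (hinc : ∀ i j : ℕ, i < j → j < k → ∀ a ∈ Fs i, ∀ b ∈ Fs j, a < b)
    (hk : ∀ j < k, ∀ x ∈ Fs j, k ≤ x) : (range k).biUnion Fs ∈ famOp schreierOne H := by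
  refine ⟨k, Fs, hH, hne, hinc, fun y hy => ?_, rfl⟩
  obtain ⟨j, hj, rfl⟩ := mem_image.1 hy
  calc _ ≤ (range k).card := card_image_le
    _ = k := card_range k
    _ ≤ _ := hk j (mem_range.1 hj) _ (hne j (mem_range.1 hj)).csInf_mem

end SchreierOneBlocks

lemma biUnion_filter_mem_famOp_famMap {L : ℕ → ℕ} {F G : Set (Finset ℕ)} {n : ℕ}
    {Es : ℕ → Finset ℕ} (hG : ∀ i < n, Es i ∈ G) (hne : ∀ i < n, (Es i).Nonempty)
    (hinc : ∀ i j : ℕ, i < j → j < n → ∀ a ∈ Es i, ∀ b ∈ Es j, a < b) {D : Finset ℕ}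
    (hD : D ∈ F) (hDmins : D.image L ⊆ (range n).image fun i => sInf (Es i : Set ℕ)) :
    ((range n).filter fun i => sInf (Es i : Set ℕ) ∈ D.image L).biUnion Es ∈
      famOp (famMap L F) G := by
  refine biUnion_mem_famOp _ Es (fun i hi => hG i (mem_range.1 (mem_filter.1 hi).1))
    (fun i hi => hne i (mem_range.1 (mem_filter.1 hi).1))
    (fun i _ i' hi' hii' => hinc i i' hii' (mem_range.1 (mem_filter.1 hi').1)) ⟨D, hD, ?_⟩
  refine Subset.antisymm (fun y hy => ?_) fun y hy => ?_
  · obtain ⟨i, hi, rfl⟩ := mem_image.1 (hDmins hy)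
    exact mem_image.2 ⟨i, mem_filter.2 ⟨hi, hy⟩, rfl⟩
  · obtain ⟨i, hi, rfl⟩ := mem_image.1 hy
    exact (mem_filter.1 hi).2

theorem famOp_famMap_famOp_schreierOne_subset {L : ℕ → ℕ} (hL : StrictMono L)
    (F G : Set (Finset ℕ)) :
    famOp (famMap L (famOp schreierOne F)) G ⊆ famOp schreierOne (famOp (famMap L F) G) := by
  classical
  rintro E ⟨n, Es, hG, hne, hinc, ⟨_, ⟨k, Fs, hF, hFne, hFinc, hFmins, rfl⟩, hmins⟩, rfl⟩
  set m : ℕ → ℕ := fun i => sInf (Es i : Set ℕ)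
  replace hmins : ((range k).biUnion Fs).image L = (range n).image m := hmins
  -- the `j`-th new block collects the old blocks whose minima lie in `L(Fs j)`
  set I : ℕ → Finset ℕ := fun j => (range n).filter fun i => m i ∈ (Fs j).image L
  have hI_lt : ∀ j, ∀ i ∈ I j, i < n := fun j i hi => mem_range.1 (mem_filter.1 hi).1
  have hI_min : ∀ j, ∀ i ∈ I j, ∃ x ∈ Fs j, L x = m i := fun j i hi =>
    mem_image.1 (mem_filter.1 hi).2
  have hI_sub : ∀ j < k, (Fs j).image L ⊆ (range n).image m := fun j hj =>
    hmins ▸ image_subset_image (subset_biUnion_of_mem Fs (mem_range.2 hj))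
  have hI_cover : ∀ i ∈ range n, ∃ j ∈ range k, m i ∈ (Fs j).image L := fun i hi => by
    have : m i ∈ ((range k).biUnion Fs).image L := hmins ▸ mem_image_of_mem m hi
    obtain ⟨x, hx, hxi⟩ := mem_image.1 this
    obtain ⟨j, hj, hxj⟩ := mem_biUnion.1 hx
    exact ⟨j, hj, hxi ▸ mem_image_of_mem L hxj⟩
  have hk_le := le_of_mem_of_image_sInf_mem_schreierOne hFne hFinc hFmins
  rw [biUnion_eq_biUnion_filter Es _ hI_cover]
  refine biUnion_mem_famOp_schreierOne (fun j hj => ?_) (fun j hj => ?_) ?_ ?_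
  · exact biUnion_filter_mem_famOp_famMap hG hne hinc (hF j hj) (hI_sub j hj)
  · obtain ⟨x, hx⟩ := hFne j hj
    obtain ⟨i, hi, hix⟩ := mem_image.1 (hI_sub j hj (mem_image_of_mem L hx))
    obtain ⟨a, ha⟩ := hne i (mem_range.1 hi)
    exact ⟨a, mem_biUnion.2 ⟨i, mem_filter.2 ⟨hi, hix ▸ mem_image_of_mem L hx⟩, ha⟩⟩
  · intro j j' hjj' hj' a ha b hb
    obtain ⟨i, hi, hai⟩ := mem_biUnion.1 ha
    obtain ⟨i', hi', hbi'⟩ := mem_biUnion.1 hb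
    obtain ⟨x, hx, hxi⟩ := hI_min j i hi
    obtain ⟨x', hx', hxi'⟩ := hI_min j' i' hi'
    have : m i < m i' := hxi ▸ hxi' ▸ hL (hFinc j j' hjj' hj' x hx x' hx')
    exact lt_of_sInf_lt_sInf_of_blocks hne hinc (hI_lt j i hi) (hI_lt j' i' hi') this a hai b hbi'
  · intro j hj a ha
    obtain ⟨i, hi, hai⟩ := mem_biUnion.1 ha
    obtain ⟨x, hx, hxi⟩ := hI_min j i hi
    calc k ≤ x := hk_le j hj x hx
      _ ≤ L x := hL.le_apply
      _ = m i := hxi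
      _ ≤ a := Nat.sInf_le hai

def SpreadsInto (L : ℕ → ℕ) (F G H : Set (Finset ℕ)) : Prop :=
  ∀ L' : ℕ → ℕ, StrictMono L' → (∀ n, L n ≤ L' n) → famOp (famMap L' F) G ⊆ H

def HasSpreadsIntoSubseq (F G H : Set (Finset ℕ)) : Prop :=
  ∀ M : ℕ → ℕ, StrictMono M →
    ∃ L : ℕ → ℕ, StrictMono L ∧ Set.range L ⊆ Set.range M ∧ SpreadsInto L F G H

section Spreads

variable {F G H H' : Set (Finset ℕ)}

lemma HasSpreadsIntoSubseq.mono (h : HasSpreadsIntoSubseq F G H) (hH : H ⊆ H') :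
    HasSpreadsIntoSubseq F G H' := fun M hM => by
  obtain ⟨L, hL, hLM, hspread⟩ := h M hM
  exact ⟨L, hL, hLM, fun L' hL' hLL' => (hspread L' hL' hLL').trans hH⟩

lemma HasSpreadsIntoSubseq.restrict_ge (h : HasSpreadsIntoSubseq F G H) (q : ℕ) :
    HasSpreadsIntoSubseq F G {E ∈ H | ∀ a ∈ E, q ≤ a} := fun M hM => by
  obtain ⟨L, hL, hLM, hspread⟩ := h M hM
  refine ⟨fun n => L (n + q), hL.comp (strictMono_id.add_const q),
    fun _ ⟨n, hn⟩ => hLM ⟨n + q, hn⟩, fun L' hL' hLL' E hE => ⟨?_, fun a ha => ?_⟩⟩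
  · exact hspread L' hL' (fun n => (hL.monotone (n.le_add_right q)).trans (hLL' n)) hE
  · obtain ⟨x, hx⟩ := exists_le_of_mem_famOp_famMap hE a ha
    calc q ≤ x + q := Nat.le_add_left q x
      _ ≤ L (x + q) := hL.le_apply
      _ ≤ L' x := hLL' x
      _ ≤ a := hx

lemma HasSpreadsIntoSubseq.famOp_schreierOne_right (h : HasSpreadsIntoSubseq F G H) :
    HasSpreadsIntoSubseq F G (famOp schreierOne H) :=
  (h.restrict_ge 1).mono fun _ hE => mem_famOp_schreierOne_of_mem hE.1 hE.2

lemma HasSpreadsIntoSubseq.famOp_schreierOne (h : HasSpreadsIntoSubseq F G H) :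
    HasSpreadsIntoSubseq (famOp schreierOne F) G (famOp schreierOne H) := fun M hM => by
  obtain ⟨L, hL, hLM, hspread⟩ := h M hM
  exact ⟨L, hL, hLM, fun L' hL' hLL' =>
    (famOp_famMap_famOp_schreierOne_subset hL' F G).trans
      (famOp_mono_right (hspread L' hL' hLL'))⟩

lemma StrictMono.le_of_range_subset {f g : ℕ → ℕ} (hf : StrictMono f) (hg : StrictMono g)
    (h : Set.range g ⊆ Set.range f) (m : ℕ) : f m ≤ g m := by
  induction m with
  | zero =>
    obtain ⟨t, ht⟩ := h ⟨0, rfl⟩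
    exact ht ▸ hf.monotone t.zero_le
  | succ m ih =>
    obtain ⟨t, ht⟩ := h ⟨m + 1, rfl⟩
    have : m < t := hf.lt_iff_lt.1 (ih.trans_lt (ht ▸ hg m.lt_succ_self))
    exact ht ▸ hf.monotone this

lemma StrictMono.exists_spread_eq_of_le {f g : ℕ → ℕ} (hf : StrictMono f) (hg : StrictMono g)
    {n : ℕ} (hfg : ∀ m, n ≤ m → f m ≤ g m) :
    ∃ h : ℕ → ℕ, StrictMono h ∧ (∀ m, f m ≤ h m) ∧ ∀ m, n ≤ m → h m = g m := by
  refine ⟨fun m => if m < n then f m else g m, fun i j hij => ?_, fun m => ?_,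
    fun m hm => if_neg hm.not_gt⟩
  · by_cases hj : j < n
    · simpa [hij.trans hj, hj] using hf hij
    · by_cases hi : i < n
      · simpa [hi, hj] using (hf hi).trans_le ((hfg n le_rfl).trans (hg.monotone (not_lt.1 hj)))
      · simpa [hi, hj] using hg hij
  · dsimp only
    split_ifs with hm
    · exact le_rfl
    · exact hfg m (not_lt.1 hm)

lemma exists_nested_subseqs {P : ℕ → (ℕ → ℕ) → Prop}
    (h : ∀ n (M : ℕ → ℕ), StrictMono M →
      ∃ L : ℕ → ℕ, StrictMono L ∧ Set.range L ⊆ Set.range M ∧ P n L)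
    {M : ℕ → ℕ} (hM : StrictMono M) :
    ∃ Gs : ℕ → ℕ → ℕ, (∀ n, StrictMono (Gs n) ∧ P n (Gs n)) ∧ Set.range (Gs 0) ⊆ Set.range M ∧
      ∀ n, Set.range (Gs (n + 1)) ⊆ Set.range (Gs n) := by
  choose! next hnext using h
  let Gs' : ℕ → ℕ → ℕ := fun n => Nat.rec M (fun k Gk => next k Gk) n
  have hGs' : ∀ n, StrictMono (Gs' n) := fun n => by
    induction n with
    | zero => exact hM
    | succ n ih => exact (hnext n _ ih).1
  exact ⟨fun n => Gs' (n + 1), fun n => ⟨(hnext n _ (hGs' n)).1, (hnext n _ (hGs' n)).2.2⟩,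
    (hnext 0 M hM).2.1, fun n => (hnext (n + 1) _ (hGs' (n + 1))).2.1⟩

theorem HasSpreadsIntoSubseq.diagonal {A H : ℕ → Set (Finset ℕ)}
    (h : ∀ n, HasSpreadsIntoSubseq (A n) G (H n)) :
    HasSpreadsIntoSubseq {F | ∃ n, (∀ m ∈ F, n ≤ m) ∧ F ∈ A n} G (⋃ n, H n) := by
  intro M hM
  obtain ⟨Gs, hGs, hGs0, hGs_succ⟩ := exists_nested_subseqs h hM
  have hGs_anti : ∀ n m, n ≤ m → Set.range (Gs m) ⊆ Set.range (Gs n) := fun n m hnm => by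
    induction m, hnm using Nat.le_induction with
    | base => exact subset_rfl
    | succ m _ ih => exact (hGs_succ m).trans ih
  have hGs_le : ∀ n m, n ≤ m → ∀ t, Gs n t ≤ Gs m t := fun n m hnm =>
    (hGs n).1.le_of_range_subset (hGs m).1 (hGs_anti n m hnm)
  refine ⟨fun n => Gs n n, strictMono_nat_of_lt_succ fun n => ?_, ?_, ?_⟩
  · exact ((hGs n).1 n.lt_succ_self).trans_le (hGs_le n (n + 1) n.le_succ _)
  · rintro _ ⟨n, rfl⟩
    exact hGs0 (hGs_anti 0 n n.zero_le ⟨n, rfl⟩)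
  · rintro L' hL' hLL' E ⟨k, Es, hEsG, hne, hinc, ⟨D, ⟨n, hDn, hDA⟩, hD⟩, rfl⟩
    -- below `n ≤ min D`, `L'` can be replaced by `Gs n`: a spread of `Gs n` with the same `L'(D)`
    obtain ⟨L'', hL'', hGsL'', hL''L'⟩ := (hGs n).1.exists_spread_eq_of_le hL'
      fun m hm => (hGs_le n m hm m).trans (hLL' m)
    have hD'' : D.image L'' = D.image L' := image_congr fun m hm => hL''L' m (hDn m hm)
    exact Set.mem_iUnion.2 ⟨n, (hGs n).2 L'' hL'' hGsL''
      ⟨k, Es, hEsG, hne, hinc, ⟨D, hDA, hD''.trans hD⟩, rfl⟩⟩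

end Spreads

lemma add_lt_omega1 {a b : Ordinal} (ha : a < omega1) (hb : b < omega1) : a + b < omega1 :=
  Ordinal.isPrincipal_add_ord (Cardinal.aleph0_le_aleph 1) ha hb

namespace SchreierSystem

variable (SS : SchreierSystem)

lemma empty_mem (ξ : Ordinal) (hξ : ξ < omega1) : ∅ ∈ SS.S ξ := by
  induction ξ using WellFoundedLT.induction with
  | _ ξ IH =>
  rcases Ordinal.zero_or_succ_or_isSuccLimit ξ with rfl | ⟨γ, rfl⟩ | hlim
  · rw [SS.S_zero]; exact Or.inl rfl
  · rw [Order.succ_eq_add_one, SS.S_succ]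
    exact ⟨0, fun _ => ∅, by simp, by simp, by simp, by simp [schreierOne], by simp⟩
  · rw [SS.S_limit ξ hξ hlim]
    exact ⟨0, by simp, IH _ (SS.seq_lt ξ hξ hlim 0) ((SS.seq_lt ξ hξ hlim 0).trans hξ)⟩

lemma card_le_one_of_mem_zero {E : Finset ℕ} (hE : E ∈ SS.S 0) : E.card ≤ 1 := by
  rw [SS.S_zero] at hE
  rcases hE with rfl | ⟨n, rfl⟩ <;> simp

lemma mem_of_mem_seq {ξ : Ordinal} (hξ : ξ < omega1) (hlim : Order.IsSuccLimit ξ) {q : ℕ}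
    {E : Finset ℕ} (hE : E ∈ SS.S (SS.seq ξ q)) (hq : ∀ a ∈ E, q ≤ a) : E ∈ SS.S ξ := by
  rw [SS.S_limit ξ hξ hlim]
  exact ⟨q, hq, hE⟩

lemma exists_seq_add_eq {ζ η α : Ordinal} (hlim : Order.IsSuccLimit η) (h : ζ + η < omega1)
    (hα : α < η) : ∃ q γ, α ≤ γ ∧ γ < η ∧ SS.seq (ζ + η) q = ζ + γ := by
  have hlim' := Ordinal.isSuccLimit_add ζ hlim
  have : ζ + α < ⨆ q, SS.seq (ζ + η) q := by
    rw [SS.seq_iSup _ h hlim']; exact (add_lt_add_iff_left ζ).2 hα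
  obtain ⟨q, hq⟩ := Ordinal.lt_iSup_iff.1 this
  have hζ : ζ + (SS.seq (ζ + η) q - ζ) = SS.seq (ζ + η) q :=
    Ordinal.add_sub_cancel_of_le (le_self_add.trans hq.le)
  refine ⟨q, _, ?_, ?_, hζ.symm⟩
  · exact ((add_lt_add_iff_left ζ).1 (hζ.symm ▸ hq)).le
  · exact (add_lt_add_iff_left ζ).1 (hζ.symm ▸ SS.seq_lt _ h hlim' q)

lemma hasSpreadsIntoSubseq_zero {G : Set (Finset ℕ)} (hG : ∅ ∈ G) :
    HasSpreadsIntoSubseq (SS.S 0) G G := fun M hM =>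
  ⟨M, hM, subset_rfl, fun L' _ _ => famOp_subset_of_card_le_one
    (by rintro _ ⟨E, hE, rfl⟩; exact card_image_le.trans (SS.card_le_one_of_mem_zero hE)) hG⟩

lemma hasSpreadsIntoSubseq_of_isSuccLimit {ζ η : Ordinal} (hζ : ζ < omega1) (hη : η < omega1)
    (hlim : Order.IsSuccLimit η)
    (IH : ∀ γ < η, ∀ ξ ≤ γ, HasSpreadsIntoSubseq (SS.S ξ) (SS.S ζ) (SS.S (ζ + γ)))
    {ξ : Ordinal} (hξ : ξ ≤ η) : HasSpreadsIntoSubseq (SS.S ξ) (SS.S ζ) (SS.S (ζ + η)) := by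
  have hζη := add_lt_omega1 hζ hη
  have hlim' := Ordinal.isSuccLimit_add ζ hlim
  rcases hξ.lt_or_eq with hξ | rfl
  · obtain ⟨q, γ, hξγ, hγ, hq⟩ := SS.exists_seq_add_eq hlim hζη hξ
    refine ((IH γ hγ ξ hξγ).restrict_ge q).mono fun E hE => ?_
    exact SS.mem_of_mem_seq hζη hlim' (hq ▸ hE.1) hE.2
  · choose q γ hle hlt hq using fun n => SS.exists_seq_add_eq hlim hζη (SS.seq_lt ξ hη hlim n)
    rw [SS.S_limit ξ hη hlim]
    refine (HasSpreadsIntoSubseq.diagonal fun n =>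
      (IH (γ n) (hlt n) _ (hle n)).restrict_ge (q n)).mono ?_
    simp only [Set.iUnion_subset_iff]
    exact fun n E hE => SS.mem_of_mem_seq hζη hlim' ((hq n) ▸ hE.1) hE.2

theorem hasSpreadsIntoSubseq {ζ : Ordinal} (hζ : ζ < omega1) (η : Ordinal) (hη : η < omega1)
    {ξ : Ordinal} (hξ : ξ ≤ η) : HasSpreadsIntoSubseq (SS.S ξ) (SS.S ζ) (SS.S (ζ + η)) := by
  induction η using WellFoundedLT.induction generalizing ξ with
  | _ η IH =>
  rcases Ordinal.zero_or_succ_or_isSuccLimit η with rfl | ⟨γ, rfl⟩ | hlim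
  · rw [nonpos_iff_eq_zero.1 hξ, add_zero]
    exact SS.hasSpreadsIntoSubseq_zero (SS.empty_mem ζ hζ)
  · have hγ := Order.lt_succ γ
    rw [Order.succ_eq_add_one, ← add_assoc, SS.S_succ]
    rcases hξ.lt_or_eq with hξ | rfl
    · exact (IH γ hγ (hγ.trans hη) (Order.lt_succ_iff.1 hξ)).famOp_schreierOne_right
    · rw [Order.succ_eq_add_one, SS.S_succ]
      exact (IH γ hγ (hγ.trans hη) le_rfl).famOp_schreierOne
  · exact SS.hasSpreadsIntoSubseq_of_isSuccLimit hζ hη hlim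
      (fun γ hγ _ => IH γ hγ (hγ.trans hη)) hξ

end SchreierSystem

/-- For countable ordinals `ξ, ζ < ω₁` and any infinite `M ⊆ ℕ`
(given by its increasing enumeration) there is an infinite `L ⊆ M` such that
`𝓢_ξ(L)[𝓢_ζ] ⊆ 𝓢_{ζ+ξ}`, and the inclusion persists when `L` is replaced by any
spread `L'` of `L` (i.e. `L'` increasing with `L n ≤ L' n` for all `n`). -/
theorem statement1 (SS : SchreierSystem) (ξ ζ : Ordinal) (hξ : ξ < omega1) (hζ : ζ < omega1)
    (M : ℕ → ℕ) (hM : StrictMono M) :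
    ∃ L : ℕ → ℕ, StrictMono L ∧ (∀ n : ℕ, L n ∈ Set.range M) ∧
      ∀ L' : ℕ → ℕ, StrictMono L' → (∀ n : ℕ, L n ≤ L' n) →
        famOp (famMap L' (SS.S ξ)) (SS.S ζ) ⊆ SS.S (ζ + ξ) := by
  obtain ⟨L, hL, hLM, hspread⟩ := SS.hasSpreadsIntoSubseq hζ ξ hξ le_rfl M hM
  exact ⟨L, hL, Set.range_subset_iff.1 hLM, hspread⟩
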